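/- arXiv:1806.04500 — 2 statements merged into one kernel-verified Lean document; each statement's English description precedes it below -/
import Mathlib

section
/- Integration of the decoupled shell-2 equations (quasi-stationary solutions with nonholonomic torsion, shell s = 2). Work in coordinates (x¹,x²,y) ∈ ℝ² × ℝ and write ∂_y for ∂/∂y. Let Ψ, Υ : ℝ³ → ℝ be smooth with Υ > 0, Ψ > 0 and ∂_yΨ > 0 everywhere; let g₄⁰, n₁ₖ, n₂ₖ : ℝ² → ℝ (k = 1,2) be smooth. Define g₄(x,y) := g₄⁰(x) − ∫₀^y ∂_s(Ψ²)(x,s) / (4Υ(x,s)) ds and assume g₄ < 0 everywhere; define g₃ := −(∂_yΨ)² / (4Υ² g₄), w_k := ∂_{x^k}Ψ / ∂_yΨ, and n_k(x,y) := n₁ₖ(x) + n₂ₖ(x) ∫₀^y g₃(x,s) (−g₄(x,s))^{−3/2} ds. Then, setting ϖ := ln( |∂_y g₄| / √(−g₃ g₄) ), one has ϖ = ln Ψ, and the following hold everywhere: (a) (∂_yϖ)(∂_y g₄) = 2 g₃ g₄ Υ; (b) (∂_y g₄)(∂_yϖ) w_k = (∂_y g₄)(∂_{x^k}ϖ) for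 k = 1,2; (c) ∂²_{yy} n_k + [∂_y ln( (−g₄)^{3/2} / g₃ )] ∂_y n_k = 0 for k = 1,2. -/
namespace Stmt5

noncomputable section

/-- The horizontal coordinates `(x¹, x²)`. -/
abbrev X : Type := Fin 2 → ℝ

/-- Partial derivative in the fiber coordinate `y` of a (curried) function on `ℝ² × ℝ`. -/
def pdy (f : X → ℝ → ℝ) (x : X) (y : ℝ) : ℝ := deriv (f x) y

/-- Partial derivative in the base coordinate `x^k` of a (curried) function on `ℝ² × ℝ`. -/
def pdx (k : Fin 2) (f : X → ℝ → ℝ) (x : X) (y : ℝ) : ℝ :=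
  fderiv ℝ (fun x' => f x' y) x (Pi.single k 1)

/-!
By the fundamental theorem of calculus `∂_y g₄ = -Ψ ∂_yΨ / (2Υ)`, and the choice of `g₃` makes
`-g₃ g₄ = (∂_yΨ / (2Υ))²`; hence `|∂_y g₄| / √(-g₃ g₄) = Ψ`, i.e. `ϖ = ln Ψ`, after which (a) and
(b) are algebraic identities in `Ψ`, its partial derivatives and `Υ`. For (c), `n_k` is an affine
function of `∫₀^y q` with `q = g₃ (-g₄)^{-3/2}`, and the coefficient `∂_y ln(1/q) = -∂_y q / q`
exactly cancels `∂²_{yy} n_k = n₂ₖ ∂_y q`.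
-/

open Real

section Curry

variable {𝕜 E F G : Type*} [NontriviallyNormedField 𝕜] [NormedAddCommGroup E] [NormedSpace 𝕜 E]
  [NormedAddCommGroup F] [NormedSpace 𝕜 F] [NormedAddCommGroup G] [NormedSpace 𝕜 G]
  {n : WithTop ℕ∞} {f : E → F → G}

theorem _root_.ContDiff.curry_left (hf : ContDiff 𝕜 n (Function.uncurry f)) (x : E) :
    ContDiff 𝕜 n (f x) :=
  hf.comp (contDiff_const.prodMk contDiff_id)

theorem _root_.ContDiff.curry_right (hf : ContDiff 𝕜 n (Function.uncurry f)) (y : F) :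
    ContDiff 𝕜 n fun x => f x y :=
  hf.comp (contDiff_id.prodMk contDiff_const)

end Curry

theorem hasDerivAt_const_sub_integral_deriv_sq_div {ψ υ : ℝ → ℝ} (hψ : ContDiff ℝ 1 ψ)
    (hυ : Continuous υ) (hυ0 : ∀ s, υ s ≠ 0) (a c y : ℝ) :
    HasDerivAt (fun u => c - ∫ s in a..u, deriv (fun t => ψ t ^ 2) s / (4 * υ s))
      (-(ψ y * deriv ψ y) / (2 * υ y)) y := by
  have hcont : Continuous fun s => deriv (fun t => ψ t ^ 2) s / (4 * υ s) :=
    (hψ.pow 2).continuous_deriv_one.div (continuous_const.mul hυ)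
      fun s => mul_ne_zero four_ne_zero (hυ0 s)
  have hsq : deriv (fun t => ψ t ^ 2) y = 2 * ψ y * deriv ψ y := by
    simpa using ((hψ.differentiable one_ne_zero y).hasDerivAt.fun_pow 2).deriv
  refine ((hcont.integral_hasStrictDerivAt a y).hasDerivAt.const_sub c).congr_deriv ?_
  have := hυ0 y
  rw [hsq]
  field_simp
  ring

theorem deriv_deriv_add_deriv_log_inv_mul_deriv_eq_zero {q : ℝ → ℝ} (hq : Differentiable ℝ q)
    {y : ℝ} (hqy : q y ≠ 0) (a b c : ℝ) :
    deriv (deriv fun u => a + b * ∫ s in c..u, q s) y +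
      deriv (fun t => log (q t)⁻¹) y * deriv (fun u => a + b * ∫ s in c..u, q s) y = 0 := by
  have hn : deriv (fun u => a + b * ∫ s in c..u, q s) = fun t => b * q t := by
    ext t
    exact (((hq.continuous.integral_hasStrictDerivAt c t).hasDerivAt.const_mul b).const_add
      a).deriv
  have hlog : deriv (fun t => log (q t)⁻¹) y = -(deriv q y / q y) := by
    simp only [log_inv]
    exact ((hq y).hasDerivAt.log hqy).neg.deriv
  rw [hn, hlog, deriv_const_mul _ (hq y)]
  field_simp
  ring

theorem rpow_div_eq_inv_mul_rpow_neg {a : ℝ} (ha : 0 ≤ a) (r g : ℝ) :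
    a ^ r / g = (g * a ^ (-r))⁻¹ := by
  rw [rpow_neg ha, mul_inv, inv_inv, div_eq_inv_mul]

theorem abs_div_sqrt_neg_mul_eq {p p' u g : ℝ} (hp : 0 < p) (hp' : 0 < p') (hu : 0 < u)
    (hg : g ≠ 0) :
    |-(p * p') / (2 * u)| / √(-(-p' ^ 2 / (4 * u ^ 2 * g) * g)) = p := by
  have hsqrt : √(-(-p' ^ 2 / (4 * u ^ 2 * g) * g)) = p' / (2 * u) := by
    rw [show -(-p' ^ 2 / (4 * u ^ 2 * g) * g) = (p' / (2 * u)) ^ 2 by field_simp; ring]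
    exact sqrt_sq (by positivity)
  rw [hsqrt, abs_of_neg (by rw [neg_div]; exact neg_neg_of_pos (by positivity))]
  field_simp

theorem pdy_log {f : X → ℝ → ℝ} {x : X} {y : ℝ} (hf : DifferentiableAt ℝ (f x) y)
    (hfxy : f x y ≠ 0) : pdy (fun x y => log (f x y)) x y = pdy f x y / f x y :=
  (hf.hasDerivAt.log hfxy).deriv

theorem pdx_log (k : Fin 2) {f : X → ℝ → ℝ} {x : X} {y : ℝ}
    (hf : DifferentiableAt ℝ (fun x' => f x' y) x) (hfxy : f x y ≠ 0) :
    pdx k (fun x y => log (f x y)) x y = pdx k f x y / f x y := by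
  simp only [pdx, (hf.hasFDerivAt.log hfxy).fderiv, FunLike.coe_smul, Pi.smul_apply, smul_eq_mul]
  rw [inv_mul_eq_div]

theorem differentiable_neg_deriv_sq_div {ψ υ g : ℝ → ℝ} (hψ : ContDiff ℝ 2 ψ)
    (hυ : Differentiable ℝ υ) (hg : Differentiable ℝ g) (hυ0 : ∀ s, υ s ≠ 0)
    (hg0 : ∀ s, g s ≠ 0) :
    Differentiable ℝ fun s => -deriv ψ s ^ 2 / (4 * υ s ^ 2 * g s) := by
  fun_prop (disch := simp [*])

theorem deriv_deriv_add_deriv_log_rpow_div_mul_deriv_eq_zero {g₃ g₄ : ℝ → ℝ}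
    (h₃ : Differentiable ℝ g₃) (h₄ : Differentiable ℝ g₄) (h₄neg : ∀ s, g₄ s < 0) {y : ℝ}
    (h₃y : g₃ y ≠ 0) (r a b c : ℝ) :
    deriv (deriv fun u => a + b * ∫ s in c..u, g₃ s * (-g₄ s) ^ (-r)) y +
      deriv (fun t => log ((-g₄ t) ^ r / g₃ t)) y *
        deriv (fun u => a + b * ∫ s in c..u, g₃ s * (-g₄ s) ^ (-r)) y = 0 := by
  have hpos : ∀ s, 0 < -g₄ s := fun s => neg_pos.mpr (h₄neg s)
  have hq : Differentiable ℝ fun s => g₃ s * (-g₄ s) ^ (-r) := fun s =>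
    (h₃ s).mul ((h₄ s).neg.rpow_const (Or.inl (hpos s).ne'))
  simp only [rpow_div_eq_inv_mul_rpow_neg (hpos _).le]
  exact deriv_deriv_add_deriv_log_inv_mul_deriv_eq_zero hq
    (mul_ne_zero h₃y (rpow_pos_of_pos (hpos y) _).ne') a b c

theorem shell2_quasistationary_integration_general
    (Ψ Υ : X → ℝ → ℝ)
    (hΨ : ContDiff ℝ (⊤ : ℕ∞) (Function.uncurry Ψ))
    (hΥ : ContDiff ℝ (⊤ : ℕ∞) (Function.uncurry Υ))
    (hΥpos : ∀ x y, 0 < Υ x y) (hΨpos : ∀ x y, 0 < Ψ x y)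
    (hΨy : ∀ x y, 0 < pdy Ψ x y)
    (g40 : X → ℝ) (n1 n2 : Fin 2 → X → ℝ)
    -- `g₄(x,y) = g₄⁰(x) − ∫₀^y ∂_s(Ψ²)/(4Υ) ds`, assumed negative
    (g4 : X → ℝ → ℝ)
    (hg4 : ∀ x y, g4 x y =
      g40 x - ∫ s in (0:ℝ)..y, deriv (fun t => Ψ x t ^ 2) s / (4 * Υ x s))
    (hg4neg : ∀ x y, g4 x y < 0)
    -- `g₃ = −(∂_yΨ)²/(4Υ²g₄)`
    (g3 : X → ℝ → ℝ)
    (hg3 : ∀ x y, g3 x y = -(pdy Ψ x y) ^ 2 / (4 * Υ x y ^ 2 * g4 x y))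
    -- `w_k = ∂_{x^k}Ψ / ∂_yΨ`
    (w : Fin 2 → X → ℝ → ℝ)
    (hw : ∀ k x y, w k x y = pdx k Ψ x y / pdy Ψ x y)
    -- `n_k(x,y) = n₁ₖ(x) + n₂ₖ(x) ∫₀^y g₃ (−g₄)^{−3/2} ds`
    (nf : Fin 2 → X → ℝ → ℝ)
    (hnf : ∀ k x y, nf k x y = n1 k x + n2 k x *
      ∫ s in (0:ℝ)..y, g3 x s * (-g4 x s) ^ (-(3:ℝ)/2))
    -- `ϖ = ln( |∂_y g₄| / √(−g₃ g₄) )`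
    (varpi : X → ℝ → ℝ)
    (hvarpi : ∀ x y, varpi x y =
      Real.log (|pdy g4 x y| / Real.sqrt (-(g3 x y * g4 x y)))) :
    -- `ϖ = ln Ψ`
    (∀ x y, varpi x y = Real.log (Ψ x y)) ∧
    -- (a) `(∂_yϖ)(∂_y g₄) = 2 g₃ g₄ Υ`
    (∀ x y, pdy varpi x y * pdy g4 x y = 2 * g3 x y * g4 x y * Υ x y) ∧
    -- (b) `(∂_y g₄)(∂_yϖ) w_k = (∂_y g₄)(∂_{x^k}ϖ)`
    (∀ k x y, pdy g4 x y * pdy varpi x y * w k x y = pdy g4 x y * pdx k varpi x y) ∧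
    -- (c) `∂²_{yy} n_k + [∂_y ln((−g₄)^{3/2}/g₃)] ∂_y n_k = 0`
    (∀ k x y, deriv (deriv (nf k x)) y +
      deriv (fun t => Real.log ((-g4 x t) ^ ((3:ℝ)/2) / g3 x t)) y *
        deriv (nf k x) y = 0) := by
  have hΨ₂ : ContDiff ℝ 2 (Function.uncurry Ψ) := hΨ.of_le (by norm_cast)
  have hΥ₁ : ContDiff ℝ 1 (Function.uncurry Υ) := hΥ.of_le (by norm_cast)
  have hg4' (x : X) (y : ℝ) :
      HasDerivAt (g4 x) (-(Ψ x y * pdy Ψ x y) / (2 * Υ x y)) y := by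
    rw [funext (hg4 x)]
    exact hasDerivAt_const_sub_integral_deriv_sq_div ((hΨ₂.curry_left x).of_le one_le_two)
      (hΥ₁.curry_left x).continuous (fun s => (hΥpos x s).ne') 0 _ y
  have hpdy_g4 (x : X) (y : ℝ) : pdy g4 x y = -(Ψ x y * pdy Ψ x y) / (2 * Υ x y) :=
    (hg4' x y).deriv
  have hvarpi_eq : varpi = fun x y => log (Ψ x y) := by
    ext x y
    rw [hvarpi, hpdy_g4, hg3]
    exact congrArg log (abs_div_sqrt_neg_mul_eq (hΨpos x y) (hΨy x y) (hΥpos x y)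
      (hg4neg x y).ne)
  have hpdy_varpi (x : X) (y : ℝ) : pdy varpi x y = pdy Ψ x y / Ψ x y := by
    rw [hvarpi_eq]
    exact pdy_log ((hΨ₂.curry_left x).differentiable two_ne_zero y) (hΨpos x y).ne'
  refine ⟨fun x y => by rw [hvarpi_eq], fun x y => ?_, fun k x y => ?_, fun k x y => ?_⟩
  · have := (hΨpos x y).ne'; have := (hΥpos x y).ne'; have := (hg4neg x y).ne
    rw [hpdy_varpi, hpdy_g4, hg3]
    field_simp
    ring
  · have := (hΨpos x y).ne'; have := (hΨy x y).ne'
    rw [hpdy_varpi, hw, hvarpi_eq,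
      pdx_log k ((hΨ₂.curry_right y).differentiable two_ne_zero x) (hΨpos x y).ne']
    field_simp
  · have hg4x : Differentiable ℝ (g4 x) := fun s => (hg4' x s).differentiableAt
    rw [funext (hnf k x), neg_div]
    refine deriv_deriv_add_deriv_log_rpow_div_mul_deriv_eq_zero ?_ hg4x (hg4neg x) ?_ _ _ _ _
    · rw [funext (hg3 x)]
      exact differentiable_neg_deriv_sq_div (hΨ₂.curry_left x)
        ((hΥ₁.curry_left x).differentiable one_ne_zero) hg4x (fun s => (hΥpos x s).ne')
        (fun s => (hg4neg x s).ne)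
    · rw [hg3]
      simp [(hΨy x y).ne', (hΥpos x y).ne', (hg4neg x y).ne]

theorem shell2_quasistationary_integration
    (Ψ Υ : X → ℝ → ℝ)
    (hΨ : ContDiff ℝ (⊤ : ℕ∞) (Function.uncurry Ψ))
    (hΥ : ContDiff ℝ (⊤ : ℕ∞) (Function.uncurry Υ))
    (hΥpos : ∀ x y, 0 < Υ x y) (hΨpos : ∀ x y, 0 < Ψ x y)
    (hΨy : ∀ x y, 0 < pdy Ψ x y)
    (g40 : X → ℝ) (n1 n2 : Fin 2 → X → ℝ)
    (hg40 : ContDiff ℝ (⊤ : ℕ∞) g40)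
    (hn1 : ∀ k, ContDiff ℝ (⊤ : ℕ∞) (n1 k)) (hn2 : ∀ k, ContDiff ℝ (⊤ : ℕ∞) (n2 k))
    -- `g₄(x,y) = g₄⁰(x) − ∫₀^y ∂_s(Ψ²)/(4Υ) ds`, assumed negative
    (g4 : X → ℝ → ℝ)
    (hg4 : ∀ x y, g4 x y =
      g40 x - ∫ s in (0:ℝ)..y, deriv (fun t => Ψ x t ^ 2) s / (4 * Υ x s))
    (hg4neg : ∀ x y, g4 x y < 0)
    -- `g₃ = −(∂_yΨ)²/(4Υ²g₄)`
    (g3 : X → ℝ → ℝ)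
    (hg3 : ∀ x y, g3 x y = -(pdy Ψ x y) ^ 2 / (4 * Υ x y ^ 2 * g4 x y))
    -- `w_k = ∂_{x^k}Ψ / ∂_yΨ`
    (w : Fin 2 → X → ℝ → ℝ)
    (hw : ∀ k x y, w k x y = pdx k Ψ x y / pdy Ψ x y)
    -- `n_k(x,y) = n₁ₖ(x) + n₂ₖ(x) ∫₀^y g₃ (−g₄)^{−3/2} ds`
    (nf : Fin 2 → X → ℝ → ℝ)
    (hnf : ∀ k x y, nf k x y = n1 k x + n2 k x *
      ∫ s in (0:ℝ)..y, g3 x s * (-g4 x s) ^ (-(3:ℝ)/2))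
    -- `ϖ = ln( |∂_y g₄| / √(−g₃ g₄) )`
    (varpi : X → ℝ → ℝ)
    (hvarpi : ∀ x y, varpi x y =
      Real.log (|pdy g4 x y| / Real.sqrt (-(g3 x y * g4 x y)))) :
    -- `ϖ = ln Ψ`
    (∀ x y, varpi x y = Real.log (Ψ x y)) ∧
    -- (a) `(∂_yϖ)(∂_y g₄) = 2 g₃ g₄ Υ`
    (∀ x y, pdy varpi x y * pdy g4 x y = 2 * g3 x y * g4 x y * Υ x y) ∧
    -- (b) `(∂_y g₄)(∂_yϖ) w_k = (∂_y g₄)(∂_{x^k}ϖ)`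
    (∀ k x y, pdy g4 x y * pdy varpi x y * w k x y = pdy g4 x y * pdx k varpi x y) ∧
    -- (c) `∂²_{yy} n_k + [∂_y ln((−g₄)^{3/2}/g₃)] ∂_y n_k = 0`
    (∀ k x y, deriv (deriv (nf k x)) y +
      deriv (fun t => Real.log ((-g4 x t) ^ ((3:ℝ)/2) / g3 x t)) y *
        deriv (nf k x) y = 0) :=
  shell2_quasistationary_integration_general Ψ Υ hΨ hΥ hΥpos hΨpos hΨy g40 n1 n2 g4 hg4 hg4neg g3
    hg3 w hw nf hnf varpi hvarpi

end

end Stmt5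
end

section
/- Integration of the decoupled shell-4 equations (energy-type variable). Work in coordinates (x, E) ∈ ℝ⁶ × ℝ, where x = (x¹,…,x⁶) collects all lower-shell coordinates and E is the energy-type momentum coordinate; write (·)* for ∂/∂E. Let Ψ, Υ : ℝ⁶ × ℝ → ℝ be smooth with Υ > 0, Ψ > 0 and Ψ* > 0 everywhere; let g⁷₀, n₁ₖ, n₂ₖ : ℝ⁶ → ℝ (k = 1,…,6) be smooth. Define g⁷(x,E) := g⁷₀(x) − ∫₀^E ∂_s(Ψ²)(x,s)/(4Υ(x,s)) ds and assume g⁷ < 0 everywhere; define g⁸ := −(Ψ*)²/(4Υ² g⁷), w_k := ∂_{x^k}Ψ / Ψ*, and n_k(x,E) := n₁ₖ(x) + n₂ₖ(x) ∫₀^E g⁸(x,s)(−g⁷(x,s))^{−3/2} ds. Then, setting ϖ := ln( |(g⁷)*| / √(−g⁷ g⁸) ), one has ϖ = ln Ψ, and everywhere: (a) (ϖ*)(g⁷)* = 2 g⁷ g⁸ Υ; (b) ((g⁷)* ϖ*) w_k = (g⁷)* ∂_{x^k}ϖ for all k; (c) (n_k)** + [ln( (−g⁷)^{3/2} / g⁸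 )]* (n_k)* = 0 for all k. -/
/-!
By the fundamental theorem of calculus `(g⁷)* = −ΨΨ*/(2Υ)`, while `−g⁷g⁸ = (Ψ*/(2Υ))²`, so the
quotient defining `ϖ` collapses to `Ψ`; (a) and (b) are then algebra with `ϖ* = Ψ*/Ψ` and
`∂_{x^k}ϖ = ∂_{x^k}Ψ/Ψ`. For (c), `(n_k)* = n₂ₖ h` with `h = g⁸(−g⁷)^{−3/2}`, and the logarithm in
(c) is `−ln h`, whose derivative `−h*/h` cancels `(n_k)** = n₂ₖ h*`.
-/

namespace Stmt6

noncomputable section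

/-- The lower-shell coordinates `x = (x¹,…,x⁶)`. -/
abbrev X : Type := Fin 6 → ℝ

/-- Partial derivative in the energy coordinate `E` (the `(·)*` of the paper). -/
def pdE (f : X → ℝ → ℝ) (x : X) (E : ℝ) : ℝ := deriv (f x) E

/-- Partial derivative in the lower-shell coordinate `x^k`. -/
def pdx (k : Fin 6) (f : X → ℝ → ℝ) (x : X) (E : ℝ) : ℝ :=
  fderiv ℝ (fun x' => f x' E) x (Pi.single k 1)

open Real

theorem pdE_log {f : X → ℝ → ℝ} {x : X} {E : ℝ} (hf : DifferentiableAt ℝ (f x) E)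
    (hx : f x E ≠ 0) : pdE (fun x E => log (f x E)) x E = pdE f x E / f x E :=
  deriv.log hf hx

theorem pdx_log {f : X → ℝ → ℝ} {k : Fin 6} {x : X} {E : ℝ}
    (hf : DifferentiableAt ℝ (fun x' => f x' E) x) (hx : f x E ≠ 0) :
    pdx k (fun x E => log (f x E)) x E = pdx k f x E / f x E := by
  rw [pdx, pdx, fderiv.log hf hx, FunLike.coe_smul, Pi.smul_apply, smul_eq_mul, inv_mul_eq_div]

theorem hasDerivAt_const_sub_integral_deriv_sq_div {ψ υ : ℝ → ℝ} (hψ : ContDiff ℝ 1 ψ)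
    (hυ : Continuous υ) (hυ0 : ∀ s, υ s ≠ 0) (a E : ℝ) :
    HasDerivAt (fun E => a - ∫ s in (0:ℝ)..E, deriv (fun t => ψ t ^ 2) s / (4 * υ s))
      (-(ψ E * deriv ψ E) / (2 * υ E)) E := by
  have hsq : deriv (fun t => ψ t ^ 2) = fun t => 2 * ψ t * deriv ψ t := funext fun t => by
    rw [((hψ.differentiable one_ne_zero t).hasDerivAt.fun_pow 2).deriv]
    ring
  have hc : Continuous fun s => 2 * ψ s * deriv ψ s / (4 * υ s) :=
    ((continuous_const.mul hψ.continuous).mul (hψ.continuous_deriv le_rfl)).div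
      (continuous_const.mul hυ) fun s => mul_ne_zero four_ne_zero (hυ0 s)
  rw [hsq]
  refine ((hc.integral_hasStrictDerivAt 0 E).hasDerivAt.const_sub a).congr_deriv ?_
  field_simp [hυ0 E]
  ring

theorem abs_div_sqrt_neg_mul_neg_sq_div_eq_abs {ψ ψ' υ g : ℝ} (hψ' : ψ' ≠ 0) (hυ : υ ≠ 0)
    (hg : g ≠ 0) :
    |-(ψ * ψ') / (2 * υ)| / √(-(g * (-ψ' ^ 2 / (4 * υ ^ 2 * g)))) = |ψ| := by
  have hsq : -(g * (-ψ' ^ 2 / (4 * υ ^ 2 * g))) = (ψ' / (2 * υ)) ^ 2 := by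
    field_simp
    ring
  rw [hsq, sqrt_sq_eq_abs, neg_div, abs_neg, mul_div_assoc, abs_mul]
  field_simp [abs_ne_zero.mpr (div_ne_zero hψ' (mul_ne_zero two_ne_zero hυ))]

theorem differentiable_neg_deriv_sq_div {ψ υ g : ℝ → ℝ} (hψ : ContDiff ℝ 2 ψ)
    (hυ : Differentiable ℝ υ) (hg : Differentiable ℝ g) (hυ0 : ∀ t, υ t ≠ 0)
    (hg0 : ∀ t, g t ≠ 0) : Differentiable ℝ fun t => -deriv ψ t ^ 2 / (4 * υ t ^ 2 * g t) :=
  (hψ.differentiable_deriv_two.pow 2).neg.div (((hυ.pow 2).const_mul 4).mul hg) fun t =>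
    mul_ne_zero (mul_ne_zero four_ne_zero (pow_ne_zero 2 (hυ0 t))) (hg0 t)

theorem deriv_deriv_add_deriv_log_inv_mul_deriv_eq_zero {h : ℝ → ℝ} (hc : Continuous h)
    {E : ℝ} (hd : DifferentiableAt ℝ h E) (hE : h E ≠ 0) (a b : ℝ) :
    deriv (deriv fun E => a + b * ∫ s in (0:ℝ)..E, h s) E +
      deriv (fun t => log (h t)⁻¹) E * deriv (fun E => a + b * ∫ s in (0:ℝ)..E, h s) E = 0 := by
  have hf' : deriv (fun E => a + b * ∫ s in (0:ℝ)..E, h s) = fun t => b * h t :=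
    funext fun t => (((hc.integral_hasStrictDerivAt 0 t).hasDerivAt.const_mul b).const_add a).deriv
  have hlog : HasDerivAt (fun t => log (h t)⁻¹) (-(deriv h E / h E)) E := by
    simpa only [log_inv] using (hd.hasDerivAt.log hE).fun_neg
  rw [hf', deriv_const_mul_field, hlog.deriv]
  field_simp
  ring

theorem deriv_deriv_add_deriv_log_rpow_div_mul_deriv_eq_zero {g₇ g₈ : ℝ → ℝ}
    (h₇ : Differentiable ℝ g₇) (h₈ : Differentiable ℝ g₈) (hneg : ∀ t, g₇ t < 0) {E : ℝ}
    (h₈E : g₈ E ≠ 0) (a b : ℝ) :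
    deriv (deriv fun E => a + b * ∫ s in (0:ℝ)..E, g₈ s * (-g₇ s) ^ (-(3:ℝ)/2)) E +
      deriv (fun t => log ((-g₇ t) ^ ((3:ℝ)/2) / g₈ t)) E *
        deriv (fun E => a + b * ∫ s in (0:ℝ)..E, g₈ s * (-g₇ s) ^ (-(3:ℝ)/2)) E = 0 := by
  have hd : Differentiable ℝ fun s => g₈ s * (-g₇ s) ^ (-(3:ℝ)/2) :=
    h₈.mul (h₇.neg.rpow_const fun t => Or.inl (neg_ne_zero.mpr (hneg t).ne))
  have hinv : (fun t => log ((-g₇ t) ^ ((3:ℝ)/2) / g₈ t)) =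
      fun t => log (g₈ t * (-g₇ t) ^ (-(3:ℝ)/2))⁻¹ := funext fun t => by
    rw [neg_div, rpow_neg (neg_nonneg.mpr (hneg t).le), mul_inv, inv_inv, div_eq_mul_inv,
      mul_comm]
  rw [hinv]
  exact deriv_deriv_add_deriv_log_inv_mul_deriv_eq_zero hd.continuous (hd E)
    (mul_ne_zero h₈E (rpow_pos_of_pos (neg_pos.mpr (hneg E)) _).ne') a b

theorem shell4_quasistationary_integration_general
    (Ψ Υ : X → ℝ → ℝ)
    (hΨ : ContDiff ℝ (⊤ : ℕ∞) (Function.uncurry Ψ))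
    (hΥ : ContDiff ℝ (⊤ : ℕ∞) (Function.uncurry Υ))
    (hΥpos : ∀ x E, 0 < Υ x E) (hΨpos : ∀ x E, 0 < Ψ x E)
    (hΨE : ∀ x E, 0 < pdE Ψ x E)
    (g70 : X → ℝ) (n1 n2 : Fin 6 → X → ℝ)
    -- `g⁷(x,E) = g⁷₀(x) − ∫₀^E ∂_s(Ψ²)/(4Υ) ds`, assumed negative
    (g7 : X → ℝ → ℝ)
    (hg7 : ∀ x E, g7 x E =
      g70 x - ∫ s in (0:ℝ)..E, deriv (fun t => Ψ x t ^ 2) s / (4 * Υ x s))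
    (hg7neg : ∀ x E, g7 x E < 0)
    -- `g⁸ = −(Ψ*)²/(4Υ²g⁷)`
    (g8 : X → ℝ → ℝ)
    (hg8 : ∀ x E, g8 x E = -(pdE Ψ x E) ^ 2 / (4 * Υ x E ^ 2 * g7 x E))
    -- `w_k = ∂_{x^k}Ψ / Ψ*`
    (w : Fin 6 → X → ℝ → ℝ)
    (hw : ∀ k x E, w k x E = pdx k Ψ x E / pdE Ψ x E)
    -- `n_k(x,E) = n₁ₖ(x) + n₂ₖ(x) ∫₀^E g⁸ (−g⁷)^{−3/2} ds`
    (nf : Fin 6 → X → ℝ → ℝ)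
    (hnf : ∀ k x E, nf k x E = n1 k x + n2 k x *
      ∫ s in (0:ℝ)..E, g8 x s * (-g7 x s) ^ (-(3:ℝ)/2))
    -- `ϖ = ln( |(g⁷)*| / √(−g⁷ g⁸) )`
    (varpi : X → ℝ → ℝ)
    (hvarpi : ∀ x E, varpi x E =
      Real.log (|pdE g7 x E| / Real.sqrt (-(g7 x E * g8 x E)))) :
    -- `ϖ = ln Ψ`
    (∀ x E, varpi x E = Real.log (Ψ x E)) ∧
    -- (a) `(ϖ*)(g⁷)* = 2 g⁷ g⁸ Υ`
    (∀ x E, pdE varpi x E * pdE g7 x E = 2 * g7 x E * g8 x E * Υ x E) ∧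
    -- (b) `((g⁷)* ϖ*) w_k = (g⁷)* ∂_{x^k}ϖ`
    (∀ k x E, pdE g7 x E * pdE varpi x E * w k x E = pdE g7 x E * pdx k varpi x E) ∧
    -- (c) `(n_k)** + [ln((−g⁷)^{3/2}/g⁸)]* (n_k)* = 0`
    (∀ k x E, deriv (deriv (nf k x)) E +
      deriv (fun t => Real.log ((-g7 x t) ^ ((3:ℝ)/2) / g8 x t)) E *
        deriv (nf k x) E = 0) := by
  have hΨs : ∀ x, ContDiff ℝ 2 (Ψ x) := fun x =>
    (hΨ.comp (contDiff_prodMk_right x)).of_le (WithTop.coe_le_coe.mpr le_top)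
  have hΥs : ∀ x, ContDiff ℝ 1 (Υ x) := fun x =>
    (hΥ.comp (contDiff_prodMk_right x)).of_le (WithTop.coe_le_coe.mpr le_top)
  have hg7E : ∀ x E, HasDerivAt (g7 x) (-(Ψ x E * pdE Ψ x E) / (2 * Υ x E)) E := fun x E => by
    rw [funext (hg7 x)]
    exact hasDerivAt_const_sub_integral_deriv_sq_div ((hΨs x).of_le one_le_two)
      (hΥs x).continuous (fun s => (hΥpos x s).ne') _ E
  have hpdE_g7 : ∀ x E, pdE g7 x E = -(Ψ x E * pdE Ψ x E) / (2 * Υ x E) := fun x E =>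
    (hg7E x E).deriv
  obtain rfl : varpi = fun x E => log (Ψ x E) := funext₂ fun x E => by
    rw [hvarpi, hpdE_g7, hg8, abs_div_sqrt_neg_mul_neg_sq_div_eq_abs (hΨE x E).ne'
      (hΥpos x E).ne' (hg7neg x E).ne, abs_of_pos (hΨpos x E)]
  have hpdE_varpi : ∀ x E, pdE (fun x E => log (Ψ x E)) x E = pdE Ψ x E / Ψ x E := fun x E =>
    pdE_log ((hΨs x).differentiable two_ne_zero E) (hΨpos x E).ne'
  refine ⟨fun _ _ => rfl, fun x E => ?_, fun k x E => ?_, fun k x E => ?_⟩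
  · rw [hpdE_varpi, hpdE_g7, hg8]
    field_simp [(hΨpos x E).ne', (hΥpos x E).ne', (hg7neg x E).ne]
    ring
  · rw [hpdE_varpi, hw, pdx_log ((hΨ.comp (contDiff_prodMk_left E)).differentiable (by simp) x)
      (hΨpos x E).ne']
    field_simp [(hΨpos x E).ne', (hΨE x E).ne']
  · have hg7d : Differentiable ℝ (g7 x) := fun t => (hg7E x t).differentiableAt
    rw [funext (hnf k x)]
    refine deriv_deriv_add_deriv_log_rpow_div_mul_deriv_eq_zero hg7d ?_ (hg7neg x) ?_ _ _
    · rw [funext (hg8 x)]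
      exact differentiable_neg_deriv_sq_div (hΨs x) ((hΥs x).differentiable one_ne_zero) hg7d
        (fun t => (hΥpos x t).ne') fun t => (hg7neg x t).ne
    · rw [hg8]
      simp [(hΨE x E).ne', (hΥpos x E).ne', (hg7neg x E).ne]

theorem shell4_quasistationary_integration
    (Ψ Υ : X → ℝ → ℝ)
    (hΨ : ContDiff ℝ (⊤ : ℕ∞) (Function.uncurry Ψ))
    (hΥ : ContDiff ℝ (⊤ : ℕ∞) (Function.uncurry Υ))
    (hΥpos : ∀ x E, 0 < Υ x E) (hΨpos : ∀ x E, 0 < Ψ x E)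
    (hΨE : ∀ x E, 0 < pdE Ψ x E)
    (g70 : X → ℝ) (n1 n2 : Fin 6 → X → ℝ)
    (hg70 : ContDiff ℝ (⊤ : ℕ∞) g70)
    (hn1 : ∀ k, ContDiff ℝ (⊤ : ℕ∞) (n1 k)) (hn2 : ∀ k, ContDiff ℝ (⊤ : ℕ∞) (n2 k))
    -- `g⁷(x,E) = g⁷₀(x) − ∫₀^E ∂_s(Ψ²)/(4Υ) ds`, assumed negative
    (g7 : X → ℝ → ℝ)
    (hg7 : ∀ x E, g7 x E =
      g70 x - ∫ s in (0:ℝ)..E, deriv (fun t => Ψ x t ^ 2) s / (4 * Υ x s))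
    (hg7neg : ∀ x E, g7 x E < 0)
    -- `g⁸ = −(Ψ*)²/(4Υ²g⁷)`
    (g8 : X → ℝ → ℝ)
    (hg8 : ∀ x E, g8 x E = -(pdE Ψ x E) ^ 2 / (4 * Υ x E ^ 2 * g7 x E))
    -- `w_k = ∂_{x^k}Ψ / Ψ*`
    (w : Fin 6 → X → ℝ → ℝ)
    (hw : ∀ k x E, w k x E = pdx k Ψ x E / pdE Ψ x E)
    -- `n_k(x,E) = n₁ₖ(x) + n₂ₖ(x) ∫₀^E g⁸ (−g⁷)^{−3/2} ds`
    (nf : Fin 6 → X → ℝ → ℝ)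
    (hnf : ∀ k x E, nf k x E = n1 k x + n2 k x *
      ∫ s in (0:ℝ)..E, g8 x s * (-g7 x s) ^ (-(3:ℝ)/2))
    -- `ϖ = ln( |(g⁷)*| / √(−g⁷ g⁸) )`
    (varpi : X → ℝ → ℝ)
    (hvarpi : ∀ x E, varpi x E =
      Real.log (|pdE g7 x E| / Real.sqrt (-(g7 x E * g8 x E)))) :
    -- `ϖ = ln Ψ`
    (∀ x E, varpi x E = Real.log (Ψ x E)) ∧
    -- (a) `(ϖ*)(g⁷)* = 2 g⁷ g⁸ Υ`
    (∀ x E, pdE varpi x E * pdE g7 x E = 2 * g7 x E * g8 x E * Υ x E) ∧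
    -- (b) `((g⁷)* ϖ*) w_k = (g⁷)* ∂_{x^k}ϖ`
    (∀ k x E, pdE g7 x E * pdE varpi x E * w k x E = pdE g7 x E * pdx k varpi x E) ∧
    -- (c) `(n_k)** + [ln((−g⁷)^{3/2}/g⁸)]* (n_k)* = 0`
    (∀ k x E, deriv (deriv (nf k x)) E +
      deriv (fun t => Real.log ((-g7 x t) ^ ((3:ℝ)/2) / g8 x t)) E *
        deriv (nf k x) E = 0) :=
  shell4_quasistationary_integration_general Ψ Υ hΨ hΥ hΥpos hΨpos hΨE g70 n1 n2 g7 hg7 hg7neg g8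
    hg8 w hw nf hnf varpi hvarpi

end

end Stmt6
end
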